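/- arXiv:1706.00316 — 2 statements merged into one kernel-verified Lean document; each statement's English description precedes it below -/
import Mathlib

section
/- Let N ≥ 1, let P = {(a,b) : a, b ∈ Fin N, a < b} be the set of ordered index pairs, let ρ : P → ℝ satisfy |ρ(a,b)| < 1 for every (a,b) ∈ P, and let α : Fin N → ℝ. For s : P → ℕ and m ∈ Fin N set s_m = ∑_{(a,b) ∈ P, a = m or b = m} s(a,b). Then ∑_{s : P → ℕ} (∏_{(a,b) ∈ P} ρ(a,b)^{s(a,b)}) · ∏_{m} T_{s_m}(cos(α m)) = (1/2^N) · ∑_{ε : Fin N → {−1,1}} [∑_{S ⊆ P} (−1)^{|S|} (∏_{(a,b) ∈ S} ρ(a,b)) · cos(∑_{(a,b) ∈ S} ((ε a)(α a) + (ε b)(α b)))] / ∏_{(a,b) ∈ P} (1 − 2ρ(a,b)·cos((ε a)(α a) + (ε b)(α b)) + ρ(a,b)²), where ε runs over all sign vectors Fin N → {−1,1} and S over all subsets of P. -/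
/-!
Since `T n (cos α) = cos (n α)` and a product of `N` cosines is the average over sign vectors
`ε` of `cos (∑ ε_m x_m)`, the `s`-th term equals `2⁻ᴺ ∑_ε Re ∏_p z_p ^ s_p` with
`z_p = ρ_p exp (i θ_p)` and `θ_p = ε_a α_a + ε_b α_b` for `p = (a, b)`: the exponent `s_m` of
vertex `m` collects the `s_p` of the pairs through `m`, so `∑_m ε_m s_m α_m = ∑_p s_p θ_p`.
As `|z_p| < 1`, summing over `s` factors into geometric series, giving `Re ∏_p (1 - z_p)⁻¹`,
which is `Re ∏_p (1 - z_p) / ∏_p |1 - z_p|²`; expanding `∏_p (1 - z_p)` over subsets of pairs gives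
the numerator and `|1 - z_p|² = 1 - 2 ρ_p cos θ_p + ρ_p²` the denominator.
-/

open Finset Filter Topology Complex

section ProductOfSeries

variable {ι β : Type*} [Fintype ι]

theorem tendsto_piFinset_const_atTop [DecidableEq ι] :
    Tendsto (fun t : Finset β => Fintype.piFinset fun _ : ι => t) atTop atTop := by
  classical
  refine tendsto_atTop_atTop.2 fun S => ⟨S.biUnion fun s => univ.image s, fun t ht s hs => ?_⟩
  exact Fintype.mem_piFinset.2 fun i => ht (mem_biUnion.2 ⟨s, hs, mem_image_of_mem s (mem_univ i)⟩)

theorem summable_pi_prod_of_nonneg {g : ι → β → ℝ} (hg₀ : ∀ i k, 0 ≤ g i k)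
    (hg : ∀ i, Summable (g i)) : Summable fun s : ι → β => ∏ i, g i (s i) := by
  classical
  refine summable_of_sum_le (c := ∏ i, ∑' k, g i k)
    (fun s => prod_nonneg fun i _ => hg₀ i (s i)) fun u => ?_
  obtain ⟨t, ht⟩ : ∃ t : Finset β, u ⊆ Fintype.piFinset fun _ => t :=
    (tendsto_piFinset_const_atTop.eventually (eventually_ge_atTop u)).exists
  calc ∑ s ∈ u, ∏ i, g i (s i)
      ≤ ∑ s ∈ Fintype.piFinset fun _ => t, ∏ i, g i (s i) :=
        sum_le_sum_of_subset_of_nonneg ht fun s _ _ => prod_nonneg fun i _ => hg₀ i (s i)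
    _ = ∏ i, ∑ k ∈ t, g i k := (prod_univ_sum _ _).symm
    _ ≤ ∏ i, ∑' k, g i k := prod_le_prod (fun i _ => sum_nonneg fun k _ => hg₀ i k)
        fun i _ => (hg i).sum_le_tsum t fun k _ => hg₀ i k

theorem hasSum_pi_prod_of_summable_norm {R : Type*} [NormedCommRing R] [NormOneClass R]
    [CompleteSpace R] {f : ι → β → R} (hf : ∀ i, Summable fun k => ‖f i k‖) :
    HasSum (fun s : ι → β => ∏ i, f i (s i)) (∏ i, ∑' k, f i k) := by
  classical
  have hsum : Summable fun s : ι → β => ∏ i, f i (s i) :=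
    .of_norm_bounded (summable_pi_prod_of_nonneg (fun _ _ => norm_nonneg _) hf)
      fun s => norm_prod_le _ _
  have hpartial : Tendsto (fun t : Finset β => ∑ s ∈ Fintype.piFinset fun _ => t, ∏ i, f i (s i))
      atTop (𝓝 (∏ i, ∑' k, f i k)) := by
    simp_rw [← prod_univ_sum]
    exact tendsto_finsetProd _ fun i _ => (hf i).of_norm.hasSum
  rw [← tendsto_nhds_unique (hsum.hasSum.comp tendsto_piFinset_const_atTop) hpartial]
  exact hsum.hasSum

theorem hasSum_pi_prod_pow {𝕜 : Type*} [NormedField 𝕜] [CompleteSpace 𝕜] {z : ι → 𝕜}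
    (hz : ∀ i, ‖z i‖ < 1) : HasSum (fun n : ι → ℕ => ∏ i, z i ^ n i) (∏ i, (1 - z i)⁻¹) := by
  rw [← prod_congr rfl fun i _ => tsum_geometric_of_norm_lt_one (hz i)]
  exact hasSum_pi_prod_of_summable_norm fun i => by
    simpa only [norm_pow] using summable_geometric_of_lt_one (norm_nonneg _) (hz i)

end ProductOfSeries

namespace Complex

theorem normSq_one_sub_ofReal_mul_exp (r θ : ℝ) :
    normSq (1 - r * exp (θ * I)) = 1 - 2 * r * Real.cos θ + r ^ 2 := by
  rw [normSq_apply]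
  simp only [sub_re, sub_im, one_re, one_im, re_ofReal_mul, im_ofReal_mul, exp_ofReal_mul_I_re,
    exp_ofReal_mul_I_im]
  linear_combination r ^ 2 * Real.sin_sq_add_cos_sq θ

variable {κ : Type*} [Fintype κ]

theorem re_prod_ofReal_mul_exp_pow (r θ : κ → ℝ) (n : κ → ℕ) :
    (∏ k, ((r k : ℂ) * exp (θ k * I)) ^ n k).re = (∏ k, r k ^ n k) * Real.cos (∑ k, n k * θ k) := by
  have hexp : ∏ k, exp (θ k * I) ^ n k = exp ((∑ k, n k * θ k : ℝ) * I) := by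
    simp_rw [← exp_nat_mul, ← exp_sum]
    push_cast
    rw [sum_mul]
    exact congrArg exp (sum_congr rfl fun k _ => by ring)
  simp_rw [mul_pow, prod_mul_distrib, hexp, ← ofReal_pow, ← ofReal_prod, re_ofReal_mul,
    exp_ofReal_mul_I_re]

theorem re_prod_one_sub_ofReal_mul_exp (r θ : κ → ℝ) :
    (∏ k, (1 - r k * exp (θ k * I))).re =
      ∑ S : Finset κ, (-1) ^ S.card * (∏ k ∈ S, r k) * Real.cos (∑ k ∈ S, θ k) := by
  classical
  simp_rw [sub_eq_neg_add, Fintype.prod_add, prod_const_one, mul_one, prod_neg, prod_mul_distrib,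
    ← exp_sum, ← sum_mul, re_sum]
  refine sum_congr rfl fun S _ => ?_
  rw [← ofReal_sum, ← exp_ofReal_mul_I_re, ← re_ofReal_mul]
  push_cast
  rw [mul_assoc]

theorem re_prod_inv_one_sub_ofReal_mul_exp (r θ : κ → ℝ) :
    (∏ k, (1 - r k * exp (θ k * I))⁻¹).re =
      (∑ S : Finset κ, (-1) ^ S.card * (∏ k ∈ S, r k) * Real.cos (∑ k ∈ S, θ k)) /
        ∏ k, (1 - 2 * r k * Real.cos (θ k) + r k ^ 2) := by
  simp_rw [prod_inv_distrib, inv_re, map_prod, normSq_one_sub_ofReal_mul_exp,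
    re_prod_one_sub_ofReal_mul_exp]

end Complex

theorem prod_cos_eq_sum_signs {ι : Type*} [Fintype ι] [DecidableEq ι] (x : ι → ℝ) :
    ∏ i, Real.cos (x i) = 1 / 2 ^ Fintype.card ι *
      ∑ ε : ι → ({-1, 1} : Finset ℤ), Real.cos (∑ i, ((ε i : ℤ) : ℝ) * x i) := by
  have hcos (t : ℝ) : (Real.cos t : ℂ) =
      ∑ e : ({-1, 1} : Finset ℤ), 1 / 2 * exp (((e : ℤ) * t : ℝ) * I) := by
    rw [sum_coe_sort (f := fun e : ℤ => 1 / 2 * exp (((e : ℝ) * t : ℝ) * I)),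
      sum_pair (by norm_num), ofReal_cos]
    push_cast
    rw [neg_one_mul, one_mul]
    linear_combination two_cos (t : ℂ) / 2
  have hterm (ε : ι → ({-1, 1} : Finset ℤ)) :
      ∏ i, (1 / 2 * exp ((((ε i : ℤ) : ℝ) * x i : ℝ) * I)) =
        ((1 / 2 ^ Fintype.card ι : ℝ) : ℂ) * exp ((∑ i, ((ε i : ℤ) : ℝ) * x i : ℝ) * I) := by
    rw [prod_mul_distrib, prod_const, ← exp_sum, card_univ]
    push_cast
    rw [sum_mul, one_div_pow]
  rw [← ofReal_re (∏ i, Real.cos (x i)), ofReal_prod]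
  simp_rw [hcos, Fintype.prod_sum, hterm, re_sum, re_ofReal_mul, exp_ofReal_mul_I_re, mul_sum]

theorem sum_mul_sum_incident_eq {ι κ R : Type*} [Fintype ι] [DecidableEq ι] [Fintype κ]
    [CommSemiring R] {a b : κ → ι} (hab : ∀ k, a k ≠ b k) (c : ι → R) (s : κ → R) :
    ∑ i, c i * ∑ k, (if a k = i ∨ b k = i then s k else 0) = ∑ k, s k * (c (a k) + c (b k)) := by
  simp_rw [mul_sum, mul_ite, mul_zero]
  rw [sum_comm]
  refine sum_congr rfl fun k _ => ?_
  rw [← sum_filter, show univ.filter (fun i => a k = i ∨ b k = i) = {a k, b k} by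
    ext; simp [eq_comm], sum_pair (hab k)]
  ring

section KibbleSlepian

variable {ι κ : Type*} [Fintype ι] [DecidableEq ι] [Fintype κ]

def edgePhase (a b : κ → ι) (α : ι → ℝ) (ε : ι → ({-1, 1} : Finset ℤ)) (k : κ) : ℝ :=
  ((ε (a k) : ℤ) : ℝ) * α (a k) + ((ε (b k) : ℤ) : ℝ) * α (b k)

-- The pairs `p = (a, b)` of the theorem become the edges `k` of a loopless multigraph on `ι`.
variable {a b : κ → ι} (ρ : κ → ℝ) (α : ι → ℝ)

theorem prod_pow_mul_prod_cos_eq_sum_signs (hab : ∀ k, a k ≠ b k) (s : κ → ℕ) :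
    (∏ k, ρ k ^ s k) * ∏ i, Real.cos ((∑ k, if a k = i ∨ b k = i then s k else 0 : ℕ) * α i) =
      1 / 2 ^ Fintype.card ι *
        ∑ ε, (∏ k, ((ρ k : ℂ) * exp (edgePhase a b α ε k * I)) ^ s k).re := by
  rw [prod_cos_eq_sum_signs, mul_left_comm, mul_sum]
  congr 1
  refine sum_congr rfl fun ε _ => ?_
  simp only [re_prod_ofReal_mul_exp_pow, edgePhase]
  rw [← sum_mul_sum_incident_eq hab (fun i => ((ε i : ℤ) : ℝ) * α i) (fun k => (s k : ℝ))]
  push_cast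
  exact congrArg _ (congrArg _ (sum_congr rfl fun i _ => by ring))

theorem hasSum_kibbleSlepian (hab : ∀ k, a k ≠ b k) (hρ : ∀ k, |ρ k| < 1) :
    HasSum (fun s : κ → ℕ => (∏ k, ρ k ^ s k) *
        ∏ i, Real.cos ((∑ k, if a k = i ∨ b k = i then s k else 0 : ℕ) * α i))
      (1 / 2 ^ Fintype.card ι * ∑ ε : ι → ({-1, 1} : Finset ℤ),
        (∑ S : Finset κ, (-1) ^ S.card * (∏ k ∈ S, ρ k) * Real.cos (∑ k ∈ S, edgePhase a b α ε k)) /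
          ∏ k, (1 - 2 * ρ k * Real.cos (edgePhase a b α ε k) + ρ k ^ 2)) := by
  simp_rw [prod_pow_mul_prod_cos_eq_sum_signs ρ α hab, ← re_prod_inv_one_sub_ofReal_mul_exp]
  refine (hasSum_sum fun ε _ => hasSum_re (hasSum_pi_prod_pow fun k => ?_)).mul_left _
  simpa only [norm_mul, norm_real, Real.norm_eq_abs, norm_exp_ofReal_mul_I, mul_one] using hρ k

end KibbleSlepian

open Polynomial

theorem kibble_slepian_chebyshev_T_general (N : ℕ)
    (ρ : {p : Fin N × Fin N // p.1 < p.2} → ℝ) (hρ : ∀ p, |ρ p| < 1) (α : Fin N → ℝ) :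
    ∑' s : {p : Fin N × Fin N // p.1 < p.2} → ℕ,
        (∏ p, ρ p ^ s p) *
          ∏ m : Fin N,
            (Chebyshev.T ℝ
                ((∑ p : {p : Fin N × Fin N // p.1 < p.2},
                  if p.1.1 = m ∨ p.1.2 = m then s p else 0 : ℕ) : ℤ)).eval
              (Real.cos (α m)) =
      (1 / 2 ^ N) *
        ∑ ε : Fin N → ({-1, 1} : Finset ℤ),
          (∑ S : Finset {p : Fin N × Fin N // p.1 < p.2},
              (-1 : ℝ) ^ S.card * (∏ p ∈ S, ρ p) *
                Real.cos (∑ p ∈ S,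
                  (((ε p.1.1 : ℤ) : ℝ) * α p.1.1 + ((ε p.1.2 : ℤ) : ℝ) * α p.1.2))) /
            ∏ p : {p : Fin N × Fin N // p.1 < p.2},
              (1 - 2 * ρ p *
                  Real.cos (((ε p.1.1 : ℤ) : ℝ) * α p.1.1 + ((ε p.1.2 : ℤ) : ℝ) * α p.1.2) +
                ρ p ^ 2) := by
  simp only [Chebyshev.T_real_cos, Int.cast_natCast]
  have h := hasSum_kibbleSlepian (a := fun p => p.1.1) (b := fun p => p.1.2) ρ α
    (fun p => p.2.ne) hρ
  rw [Fintype.card_fin] at h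
  exact h.tsum_eq

theorem kibble_slepian_chebyshev_T (N : ℕ) (hN : 1 ≤ N)
    (ρ : {p : Fin N × Fin N // p.1 < p.2} → ℝ) (hρ : ∀ p, |ρ p| < 1) (α : Fin N → ℝ) :
    ∑' s : {p : Fin N × Fin N // p.1 < p.2} → ℕ,
        (∏ p, ρ p ^ s p) *
          ∏ m : Fin N,
            (Chebyshev.T ℝ
                ((∑ p : {p : Fin N × Fin N // p.1 < p.2},
                  if p.1.1 = m ∨ p.1.2 = m then s p else 0 : ℕ) : ℤ)).eval
              (Real.cos (α m)) =
      (1 / 2 ^ N) *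
        ∑ ε : Fin N → ({-1, 1} : Finset ℤ),
          (∑ S : Finset {p : Fin N × Fin N // p.1 < p.2},
              (-1 : ℝ) ^ S.card * (∏ p ∈ S, ρ p) *
                Real.cos (∑ p ∈ S,
                  (((ε p.1.1 : ℤ) : ℝ) * α p.1.1 + ((ε p.1.2 : ℤ) : ℝ) * α p.1.2))) /
            ∏ p : {p : Fin N × Fin N // p.1 < p.2},
              (1 - 2 * ρ p *
                  Real.cos (((ε p.1.1 : ℤ) : ℝ) * α p.1.1 + ((ε p.1.2 : ℤ) : ℝ) * α p.1.2) +
                ρ p ^ 2) :=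
  kibble_slepian_chebyshev_T_general N ρ hρ α
end

section
/- For all x, y ∈ ℝ with |x| ≤ 1, |y| ≤ 1 and all ρ ∈ ℝ with |ρ| < 1, one has ∑_{n=0}^{∞} ρ^n · U_n(x) · T_n(y) = (1 − ρ² − 2ρxy + 2ρ²y²) / w₂(x,y|ρ). -/
/-!
Summing the three-term recurrence `U (n + 2) = 2 X U (n + 1) - U n` against `t ^ n` gives the
generating function `∑ tⁿ Uₙ(x) = (1 - 2xt + t²)⁻¹`, convergent for `|x| ≤ 1`, `‖t‖ < 1` since
`|Uₙ(x)| ≤ n + 1`. Put `y = cos θ` and `t = ρ e^{iθ}`: the real part of `tⁿ Uₙ(x)` is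
`ρⁿ Uₙ(x) cos nθ = ρⁿ Uₙ(x) Tₙ(y)`, while `w₂(x, y | ρ) = |1 - 2xt + t²|²`, so the real part of
`(1 - 2xt + t²)⁻¹` is the claimed quotient.
-/

open Polynomial Polynomial.Chebyshev

namespace Polynomial.Chebyshev

theorem abs_eval_U_real_le {x : ℝ} (hx : |x| ≤ 1) (n : ℕ) : |(U ℝ n).eval x| ≤ n + 1 := by
  induction n with
  | zero => simp
  | succ n ih =>
    have hT := abs_eval_T_real_le_one ((n : ℤ) + 1) hx
    calc |(U ℝ ↑(n + 1)).eval x|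
        = |x * (U ℝ n).eval x + (T ℝ ((n : ℤ) + 1)).eval x| := by
          rw [Nat.cast_succ, U_eq_X_mul_U_add_T]; simp
      _ ≤ |x| * |(U ℝ n).eval x| + |(T ℝ ((n : ℤ) + 1)).eval x| := by
          rw [← abs_mul]; exact abs_add_le _ _
      _ ≤ 1 * (n + 1) + 1 := by gcongr
      _ = ↑(n + 1) + 1 := by push_cast; ring

theorem mul_tsum_pow_mul_eval_U {R : Type*} [CommRing R] [TopologicalSpace R]
    [IsTopologicalRing R] [T2Space R] (x t : R)
    (h : Summable fun n : ℕ => t ^ n * (U R n).eval x) :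
    (1 - 2 * x * t + t ^ 2) * ∑' n : ℕ, t ^ n * (U R n).eval x = 1 := by
  set f : ℕ → R := fun n => t ^ n * (U R n).eval x
  set S := ∑' n, f n
  have hS : HasSum f S := h.hasSum
  have hrec (n : ℕ) : f (n + 2) = 2 * x * t * f (n + 1) - t ^ 2 * f n := by
    simp only [f, Nat.cast_add, Nat.cast_ofNat, Nat.cast_one, U_add_two, eval_sub, eval_mul,
      eval_X, eval_ofNat]
    ring
  have hshift2 : HasSum (fun n => f (n + 2)) (S - (1 + 2 * x * t)) := by
    have hinit : ∑ i ∈ Finset.range 2, f i = 1 + 2 * x * t := by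
      simp only [Finset.sum_range_succ, Finset.range_one, Finset.sum_singleton, f, pow_zero,
        pow_one, Nat.cast_zero, Nat.cast_one, U_zero, U_one, eval_one, eval_mul, eval_ofNat, eval_X]
      ring
    rw [← hinit]
    exact (hasSum_nat_add_iff' 2).2 hS
  have hshift1 : HasSum (fun n => f (n + 1)) (S - 1) := by
    simpa [f] using (hasSum_nat_add_iff' 1).2 hS
  have hrec_sum : HasSum (fun n => f (n + 2)) (2 * x * t * (S - 1) - t ^ 2 * S) := by
    simpa only [hrec] using (hshift1.mul_left (2 * x * t)).sub (hS.mul_left (t ^ 2))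
  linear_combination -(hrec_sum.unique hshift2)

theorem summable_pow_mul_eval_U_ofReal {x : ℝ} (hx : |x| ≤ 1) {t : ℂ} (ht : ‖t‖ < 1) :
    Summable fun n : ℕ => t ^ n * (U ℂ n).eval (x : ℂ) := by
  refine Summable.of_norm_bounded (g := fun n : ℕ => ((n : ℝ) + 1) * ‖t‖ ^ n) ?_ fun n => ?_
  · simpa [add_mul] using (summable_pow_mul_geometric_of_norm_lt_one 1 (by simpa using ht)).add
      (summable_geometric_of_lt_one (norm_nonneg t) ht)
  · rw [← complex_ofReal_eval_U, norm_mul, norm_pow, Complex.norm_real, Real.norm_eq_abs, mul_comm]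
    gcongr
    exact abs_eval_U_real_le hx n

end Polynomial.Chebyshev

open Complex in
theorem Complex.re_ofReal_mul_exp_mul_I_pow_mul_ofReal (ρ θ c : ℝ) (n : ℕ) :
    (((ρ : ℂ) * exp (θ * I)) ^ n * c).re = ρ ^ n * c * Real.cos (n * θ) := by
  rw [mul_pow, ← exp_nat_mul, ← mul_assoc, show ((n : ℂ) * θ) = ((n * θ : ℝ) : ℂ) by push_cast; ring]
  rw [← ofReal_pow, mul_assoc, re_ofReal_mul, re_mul_ofReal, exp_ofReal_mul_I_re]
  ring

open Complex in
theorem Complex.re_inv_one_sub_two_mul_add_sq_ofReal_mul_exp_mul_I (x ρ θ : ℝ) :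
    ((1 - 2 * x * (ρ * exp (θ * I)) + (ρ * exp (θ * I)) ^ 2)⁻¹).re =
      (1 - ρ ^ 2 - 2 * ρ * x * Real.cos θ + 2 * ρ ^ 2 * Real.cos θ ^ 2) /
        ((1 - ρ ^ 2) ^ 2 - 4 * x * Real.cos θ * ρ * (1 + ρ ^ 2) +
          4 * ρ ^ 2 * (x ^ 2 + Real.cos θ ^ 2)) := by
  set c := Real.cos θ
  set s := Real.sin θ
  have hpyth : s ^ 2 + c ^ 2 = 1 := Real.sin_sq_add_cos_sq θ
  set D := 1 - 2 * x * (ρ * exp (θ * I)) + (ρ * exp (θ * I)) ^ 2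
  have hre : D.re = 1 - ρ ^ 2 - 2 * ρ * x * c + 2 * ρ ^ 2 * c ^ 2 := by
    simp only [D, pow_two, add_re, sub_re, one_re, mul_re, mul_im, ofReal_re, ofReal_im,
      re_ofNat, im_ofNat, exp_ofReal_mul_I_re, exp_ofReal_mul_I_im]
    linear_combination (-ρ ^ 2) * hpyth
  have him : D.im = 2 * ρ * s * (ρ * c - x) := by
    simp only [D, pow_two, add_im, sub_im, one_im, mul_re, mul_im, ofReal_re, ofReal_im,
      re_ofNat, im_ofNat, exp_ofReal_mul_I_re, exp_ofReal_mul_I_im]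
    ring
  rw [inv_re, normSq_apply, hre, him]
  congr 1
  linear_combination (4 * ρ ^ 2 * (ρ * c - x) ^ 2) * hpyth

theorem chebyshev_U_T_gen_fun (x y ρ : ℝ) (hx : |x| ≤ 1) (hy : |y| ≤ 1) (hρ : |ρ| < 1) :
    ∑' n : ℕ, ρ ^ n * (Chebyshev.U ℝ (n : ℤ)).eval x * (Chebyshev.T ℝ (n : ℤ)).eval y =
      (1 - ρ ^ 2 - 2 * ρ * x * y + 2 * ρ ^ 2 * y ^ 2) /
        ((1 - ρ ^ 2) ^ 2 - 4 * x * y * ρ * (1 + ρ ^ 2) + 4 * ρ ^ 2 * (x ^ 2 + y ^ 2)) := by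
  obtain ⟨θ, rfl⟩ : ∃ θ, Real.cos θ = y :=
    ⟨Real.arccos y, Real.cos_arccos (abs_le.1 hy).1 (abs_le.1 hy).2⟩
  set t : ℂ := ρ * Complex.exp (θ * Complex.I)
  have ht : ‖t‖ < 1 := by simpa [t, Complex.norm_exp_ofReal_mul_I] using hρ
  have hsum := summable_pow_mul_eval_U_ofReal hx ht
  calc ∑' n : ℕ, ρ ^ n * (U ℝ n).eval x * (T ℝ n).eval (Real.cos θ)
      = ∑' n : ℕ, (t ^ n * (U ℂ n).eval (x : ℂ)).re := by
        refine tsum_congr fun n => ?_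
        rw [← complex_ofReal_eval_U, Complex.re_ofReal_mul_exp_mul_I_pow_mul_ofReal, T_real_cos, Int.cast_natCast]
    _ = ((1 - 2 * x * t + t ^ 2)⁻¹).re := by
        rw [← Complex.re_tsum hsum, eq_inv_of_mul_eq_one_right (mul_tsum_pow_mul_eval_U _ _ hsum)]
    _ = _ := Complex.re_inv_one_sub_two_mul_add_sq_ofReal_mul_exp_mul_I x ρ θ
end
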